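/- arXiv:1304.0719 — 8 statements merged into one kernel-verified Lean document; each statement's English description precedes it below -/
import Mathlib

section
/- In any Dallajascar (φ, H, r) on S, the precedence relation is transitive: for all x, y, z : S, if x ⊐ y and y ⊐ z, then x ⊐ z. -/
/-- A *Dallajascar* on a finite nonempty type `S`: a parent function `phi : S → Option S`,
an ordered-children function `H : S → List S`, and a root `r : S`, such that
(i) `phi r = none`; (ii) `phi x ≠ none` for `x ≠ r`; (iii) the transitive closure of the
parent relation is irreflexive; (iv) `H x` is a duplicate-free list whose members are
exactly the `y` with `phi y = some x`. -/
structure Dallajascar (S : Type*) [Fintype S] [Nonempty S] where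
  phi : S → Option S
  H : S → List S
  r : S
  phi_root : phi r = none
  phi_ne_none : ∀ x : S, x ≠ r → phi x ≠ none
  acyclic : ∀ x : S, ¬ Relation.TransGen (fun y z => phi y = some z) x x
  H_nodup : ∀ x : S, (H x).Nodup
  mem_H : ∀ x y : S, y ∈ H x ↔ phi y = some x

namespace Dallajascar

variable {S : Type*} [Fintype S] [Nonempty S]

/-- The parent relation: `P D y x` iff `x` is the parent of `y`. -/
def P (D : Dallajascar S) (y x : S) : Prop := D.phi y = some x

/-- `Nest D x y` : « x emboîte y », i.e. `x` is a strict ancestor of `y`. -/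
def Nest (D : Dallajascar S) (x y : S) : Prop := Relation.TransGen D.P y x

/-- `Prec D x y` : « x précède y » : there are ancestors-or-selves `x'` of `x` and `y'`
of `y` with a common parent `a`, `x'` occurring strictly before `y'` in `H a`. -/
def Prec (D : Dallajascar S) (x y : S) : Prop :=
  ∃ a x' y' : S, Relation.ReflTransGen D.P x x' ∧ Relation.ReflTransGen D.P y y' ∧
    D.phi x' = some a ∧ D.phi y' = some a ∧
    ∃ i j : ℕ, i < j ∧ (D.H a)[i]? = some x' ∧ (D.H a)[j]? = some y'

/- Take witnesses `x' ⊐ y'` of `x ⊐ y` and `y'' ⊐ z'` of `y ⊐ z`, siblings in each case.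
Since parents are unique, `y'` and `y''`, both ancestors-or-selves of `y`, lie on one branch.
If they coincide, the order of `H` on the children of their parent is transitive. Otherwise
the higher of the two is a strict ancestor of the lower one's sibling, i.e. of `x'` or of `z'`,
and the other witnessing pair already shows `x ⊐ z`. -/

open Relation

theorem _root_.Relation.ReflTransGen.trichotomous_of_rightUnique {α : Type*}
    {r : α → α → Prop} (hr : Relator.RightUnique r) {a b c : α} (hab : ReflTransGen r a b)
    (hac : ReflTransGen r a c) : b = c ∨ TransGen r b c ∨ TransGen r c b := by
  rcases hab.total_of_right_unique hr hac with hbc | hcb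
  · rcases reflTransGen_iff_eq_or_transGen.1 hbc with rfl | hbc
    exacts [Or.inl rfl, Or.inr (Or.inl hbc)]
  · rcases reflTransGen_iff_eq_or_transGen.1 hcb with rfl | hcb
    exacts [Or.inl rfl, Or.inr (Or.inr hcb)]

theorem P_rightUnique (D : Dallajascar S) : Relator.RightUnique D.P :=
  fun _ _ _ hb hc => Option.some.inj (hb.symm.trans hc)

def SiblingBefore (D : Dallajascar S) (u v : S) : Prop :=
  ∃ a, D.phi u = some a ∧ D.phi v = some a ∧
    ∃ i j : ℕ, i < j ∧ (D.H a)[i]? = some u ∧ (D.H a)[j]? = some v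

theorem prec_iff (D : Dallajascar S) {x y : S} :
    D.Prec x y ↔
      ∃ u v, ReflTransGen D.P x u ∧ ReflTransGen D.P y v ∧ D.SiblingBefore u v :=
  ⟨fun ⟨a, u, v, hxu, hyv, hu, hv, hij⟩ => ⟨u, v, hxu, hyv, a, hu, hv, hij⟩,
    fun ⟨u, v, hxu, hyv, a, hu, hv, hij⟩ => ⟨a, u, v, hxu, hyv, hu, hv, hij⟩⟩

theorem transGen_of_sibling {D : Dallajascar S} {u v w a : S} (hu : D.phi u = some a)
    (hv : D.phi v = some a) (hvw : TransGen D.P v w) : TransGen D.P u w := by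
  obtain ⟨c, hvc, hcw⟩ := TransGen.head'_iff.1 hvw
  obtain rfl : c = a := D.P_rightUnique hvc hv
  exact TransGen.head'_iff.2 ⟨c, hu, hcw⟩

namespace SiblingBefore

variable {D : Dallajascar S} {u v w : S}

theorem trans (huv : D.SiblingBefore u v) (hvw : D.SiblingBefore v w) :
    D.SiblingBefore u w := by
  obtain ⟨a, hu, hv, i, j, hij, hi, hj⟩ := huv
  obtain ⟨b, hv', hw, k, l, hkl, hk, hl⟩ := hvw
  obtain rfl : a = b := D.P_rightUnique hv hv'
  obtain rfl : j = k :=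
    (List.getElem?_inj (List.getElem?_eq_some_iff.1 hj).1 (D.H_nodup a)).1 (hj.trans hk.symm)
  exact ⟨a, hu, hw, i, l, hij.trans hkl, hi, hl⟩

theorem transGen_left (huv : D.SiblingBefore u v) (hvw : TransGen D.P v w) :
    TransGen D.P u w :=
  have ⟨_, hu, hv, _⟩ := huv
  transGen_of_sibling hu hv hvw

theorem transGen_right (huv : D.SiblingBefore u v) (huw : TransGen D.P u w) :
    TransGen D.P v w :=
  have ⟨_, hu, hv, _⟩ := huv
  transGen_of_sibling hv hu huw

end SiblingBefore

/-- Precedence is transitive. -/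
theorem prec_trans (D : Dallajascar S) :
    ∀ x y z : S, D.Prec x y → D.Prec y z → D.Prec x z := by
  intro x y z hxy hyz
  obtain ⟨x', y', hxx', hyy', hx'y'⟩ := D.prec_iff.1 hxy
  obtain ⟨y'', z', hyy'', hzz', hy''z'⟩ := D.prec_iff.1 hyz
  refine D.prec_iff.2 ?_
  rcases hyy'.trichotomous_of_rightUnique D.P_rightUnique hyy'' with rfl | hy'y'' | hy''y'
  · exact ⟨x', z', hxx', hzz', hx'y'.trans hy''z'⟩
  · exact ⟨y'', z', hxx'.trans (hx'y'.transGen_left hy'y'').to_reflTransGen, hzz', hy''z'⟩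
  · exact ⟨x', y', hxx', hzz'.trans (hy''z'.transGen_right hy''y').to_reflTransGen, hx'y'⟩

end Dallajascar
end

section
/- In any Dallajascar (φ, H, r) on S, for all x, y, z : S, if x ∫ y and y ⊐ z, then x ∫ z or x ⊐ z. -/
namespace Dallajascar

variable {S : Type*} [Fintype S] [Nonempty S]

/-- Comparability on the ancestor chain: since `phi` is a function, any two
ancestors of `y` are comparable. -/
theorem chain_compare (D : Dallajascar S) {y b x : S}
    (hb : Relation.ReflTransGen D.P y b) (hx : Relation.TransGen D.P y x) :
    Relation.ReflTransGen D.P x b ∨ Relation.TransGen D.P b x := by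
  induction hb with
  | refl => exact Or.inr hx
  | tail hyc hcb ih =>
    rename_i c b
    rcases ih with h | h
    · exact Or.inl (h.tail hcb)
    · rcases (Relation.TransGen.head'_iff).1 h with ⟨d, hcd, hdx⟩
      have : d = b := by
        simp only [P] at hcd hcb
        rw [hcb] at hcd; exact (Option.some_injective _ hcd).symm
      subst this
      rcases hdx.cases_head with h' | ⟨e, hbe, hex⟩
      · exact Or.inl (h' ▸ Relation.ReflTransGen.refl)
      · exact Or.inr (Relation.TransGen.head' hbe hex)

/-- If `x ∫ y` and `y ⊐ z` then `x ∫ z` or `x ⊐ z`. -/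
theorem nest_or_prec_of_nest_prec (D : Dallajascar S) :
    ∀ x y z : S, D.Nest x y → D.Prec y z → D.Nest x z ∨ D.Prec x z := by
  rintro x y z hxy ⟨a, y', z', hy, hz, hpy, hpz, i, j, hij, hi, hj⟩
  rcases D.chain_compare hy hxy with h | h
  · exact Or.inr ⟨a, y', z', h, hz, hpy, hpz, i, j, hij, hi, hj⟩
  · left
    rcases (Relation.TransGen.head'_iff).1 h with ⟨d, hyd, hdx⟩
    have hda : d = a := by
      simp only [P] at hyd
      rw [hpy] at hyd; exact Option.some_injective _ hyd.symm
    rw [hda] at hdx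
    have hza : Relation.TransGen D.P z a :=
      Relation.TransGen.trans_right hz (Relation.TransGen.single hpz)
    exact Relation.TransGen.trans_left hza hdx

end Dallajascar
end

section
/- In any Dallajascar (φ, H, r) on S, for all x, y, x', y' : S, if x ∫ y, x' ∫ y' and x ⊐ x', then y ⊐ y'. -/
namespace Dallajascar

variable {S : Type*} [Fintype S] [Nonempty S]

/-- If `x ∫ y`, `x' ∫ y'` and `x ⊐ x'` then `y ⊐ y'`. -/
theorem prec_of_nest_nest_prec (D : Dallajascar S) :
    ∀ x y x' y' : S, D.Nest x y → D.Nest x' y' → D.Prec x x' → D.Prec y y' := by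
  rintro x y x' y' hxy hxy' ⟨a, u, v, hxu, hxv, h1, h2, i, j, hij, hi, hj⟩
  exact ⟨a, u, v, hxy.to_reflTransGen.trans hxu, hxy'.to_reflTransGen.trans hxv,
    h1, h2, i, j, hij, hi, hj⟩

end Dallajascar
end

section
/- In any Dallajascar (φ, H, r) on S, for all x, y, x', y' : S, if x ∫ y, x' ∫ y' and y ⊐ y', then x = x' or x ∫ x' or x' ∫ x or x ⊐ x'. -/
namespace Dallajascar

variable {S : Type*} [Fintype S] [Nonempty S]

lemma comp (D : Dallajascar S) {w u v : S}
    (h1 : Relation.ReflTransGen D.P w u) (h2 : Relation.ReflTransGen D.P w v) :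
    Relation.ReflTransGen D.P u v ∨ Relation.ReflTransGen D.P v u := by
  induction h1 using Relation.ReflTransGen.head_induction_on with
  | refl => exact Or.inl h2
  | head step rest ih =>
    rename_i p q
    rcases h2.cases_head with rfl | ⟨m, step', rest'⟩
    · exact Or.inr (Relation.ReflTransGen.head step rest)
    · have : q = m := Option.some.inj (step.symm.trans step')
      subst this
      exact ih rest'

lemma split (D : Dallajascar S) {w u v a : S}
    (h1 : Relation.ReflTransGen D.P w u) (h2 : Relation.ReflTransGen D.P w v)
    (ha : D.phi v = some a) :
    Relation.ReflTransGen D.P u v ∨ Relation.ReflTransGen D.P a u := by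
  rcases comp D h1 h2 with h | h
  · exact Or.inl h
  · rcases h.cases_head with rfl | ⟨m, step, rest⟩
    · exact Or.inl Relation.ReflTransGen.refl
    · have : m = a := Option.some.inj (step.symm.trans ha)
      subst this
      exact Or.inr rest

/-- Paper's Property 9: if `x ∫ y`, `x' ∫ y'` and `y ⊐ y'`, then `x = x'` or
`x ∫ x'` or `x' ∫ x` or `x ⊐ x'`. -/
theorem property_nine (D : Dallajascar S) :
    ∀ x y x' y' : S, D.Nest x y → D.Nest x' y' → D.Prec y y' →
      x = x' ∨ D.Nest x x' ∨ D.Nest x' x ∨ D.Prec x x' := by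
  rintro x y x' y' hxy hx'y' ⟨a, b, c, hyb, hy'c, hb, hc, i, j, hij, hi, hj⟩
  rcases split D hxy.to_reflTransGen hyb hb with hxb | hax
  · rcases split D hx'y'.to_reflTransGen hy'c hc with hx'c | hax'
    · exact Or.inr (Or.inr (Or.inr ⟨a, b, c, hxb, hx'c, hb, hc, i, j, hij, hi, hj⟩))
    · exact Or.inr (Or.inr (Or.inl (Relation.TransGen.trans_right hxb
        (Relation.TransGen.head' hb hax'))))
  · have hy'x : Relation.ReflTransGen D.P y' x :=
      hy'c.trans ((Relation.ReflTransGen.single (show D.P c a from hc)).trans hax)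
    rcases comp D hy'x hx'y'.to_reflTransGen with h | h
    · rcases (Relation.reflTransGen_iff_eq_or_transGen.mp h) with rfl | h'
      · exact Or.inl rfl
      · exact Or.inr (Or.inr (Or.inl h'))
    · rcases (Relation.reflTransGen_iff_eq_or_transGen.mp h) with rfl | h'
      · exact Or.inl rfl
      · exact Or.inr (Or.inl h')

end Dallajascar
end

section
/- In any Dallajascar (φ, H, r) on S, the witness of the precedence relation is unique: for all x, y : S, if the triples (a, x₁, y₁) and (b, x₂, y₂) both satisfy Relation.ReflTransGen P x x_i, Relation.ReflTransGen P y y_i, φ x_i = some of the common parent, φ y_i = some of the common parent, and x_i occurring strictly before y_i in the list H of that parent (with common parent a for the first triple and b for the second), then a = b, x₁ = x₂ and y₁ = y₂. -/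
namespace Dallajascar

variable {S : Type*} [Fintype S] [Nonempty S]

/-!
Ancestor chains are linearly ordered, since every node has at most one parent. If `x₁ ≠ y₁`
are children of `a` lying above `x` and `y` respectively, then `a` lies below every common
ancestor-or-self `c` of `x` and `y`: otherwise `c` would lie below `x₁` or equal it, so `x₁`
and `y₁` would both lie above `y`, hence be comparable siblings, hence equal. Applied to both
witnesses this gives `a ≤ b ≤ a` in the ancestor order, so `a = b`, and then `x₁`, `y₁` are
forced to be the children of `a` on the ancestor chains of `x` and `y`.
-/

theorem _root_.List.Nodup.ne_of_getElem?_eq_some {α : Type*} {l : List α} (hl : l.Nodup)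
    {i j : ℕ} {u v : α} (hij : i ≠ j) (hi : l[i]? = some u) (hj : l[j]? = some v) : u ≠ v := by
  rintro rfl
  obtain ⟨hlen, -⟩ := List.getElem?_eq_some_iff.mp hi
  exact hij ((List.getElem?_inj hlen hl).mp (hi.trans hj.symm))

section

variable (D : Dallajascar S)

theorem P_rightUnique_s11 : Relator.RightUnique D.P :=
  fun _ _ _ hv hw => Option.some.inj (hv.symm.trans hw)

theorem reflTransGen_P_antisymm {u v : S} (huv : Relation.ReflTransGen D.P u v)
    (hvu : Relation.ReflTransGen D.P v u) : u = v := by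
  rcases huv.cases_head with rfl | ⟨w, huw, hwv⟩
  · rfl
  · exact (D.acyclic u (Relation.TransGen.head' huw (hwv.trans hvu))).elim

theorem eq_of_reflTransGen_of_phi_eq {u v c : S} (huv : Relation.ReflTransGen D.P u v)
    (hu : D.phi u = some c) (hv : D.phi v = some c) : u = v := by
  rcases huv.cases_head with rfl | ⟨w, huw, hwv⟩
  · rfl
  · obtain rfl : w = c := D.P_rightUnique_s11 huw hu
    exact (D.acyclic w (Relation.TransGen.tail' hwv hv)).elim

theorem eq_of_ancestors_of_phi_eq {x u v c : S} (hxu : Relation.ReflTransGen D.P x u)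
    (hxv : Relation.ReflTransGen D.P x v) (hu : D.phi u = some c) (hv : D.phi v = some c) :
    u = v := by
  rcases hxu.total_of_right_unique D.P_rightUnique_s11 hxv with huv | hvu
  · exact D.eq_of_reflTransGen_of_phi_eq huv hu hv
  · exact (D.eq_of_reflTransGen_of_phi_eq hvu hv hu).symm

theorem reflTransGen_parent_of_common_ancestor {x y x₁ y₁ a c : S}
    (hx₁ : Relation.ReflTransGen D.P x x₁) (hy₁ : Relation.ReflTransGen D.P y y₁)
    (hpx₁ : D.phi x₁ = some a) (hpy₁ : D.phi y₁ = some a) (hne : x₁ ≠ y₁)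
    (hxc : Relation.ReflTransGen D.P x c) (hyc : Relation.ReflTransGen D.P y c) :
    Relation.ReflTransGen D.P a c := by
  have hyx₁ : ¬ Relation.ReflTransGen D.P y x₁ :=
    fun h => hne (D.eq_of_ancestors_of_phi_eq h hy₁ hpx₁ hpy₁)
  rcases hx₁.total_of_right_unique D.P_rightUnique_s11 hxc with hx₁c | hcx₁
  · rcases hx₁c.cases_head with rfl | ⟨w, hx₁w, hwc⟩
    · exact absurd hyc hyx₁
    · rwa [D.P_rightUnique_s11 hx₁w hpx₁] at hwc
  · exact absurd (hyc.trans hcx₁) hyx₁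

end

/-- The witness triple `(a, x', y')` of the precedence relation is unique. -/
theorem prec_witness_unique (D : Dallajascar S) (x y : S)
    (a x₁ y₁ b x₂ y₂ : S)
    (hx₁ : Relation.ReflTransGen D.P x x₁) (hy₁ : Relation.ReflTransGen D.P y y₁)
    (hpx₁ : D.phi x₁ = some a) (hpy₁ : D.phi y₁ = some a)
    (hij₁ : ∃ i j : ℕ, i < j ∧ (D.H a)[i]? = some x₁ ∧ (D.H a)[j]? = some y₁)
    (hx₂ : Relation.ReflTransGen D.P x x₂) (hy₂ : Relation.ReflTransGen D.P y y₂)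
    (hpx₂ : D.phi x₂ = some b) (hpy₂ : D.phi y₂ = some b)
    (hij₂ : ∃ i j : ℕ, i < j ∧ (D.H b)[i]? = some x₂ ∧ (D.H b)[j]? = some y₂) :
    a = b ∧ x₁ = x₂ ∧ y₁ = y₂ := by
  obtain ⟨i₁, j₁, hlt₁, hi₁, hj₁⟩ := hij₁
  obtain ⟨i₂, j₂, hlt₂, hi₂, hj₂⟩ := hij₂
  have hne₁ : x₁ ≠ y₁ := (D.H_nodup a).ne_of_getElem?_eq_some hlt₁.ne hi₁ hj₁
  have hne₂ : x₂ ≠ y₂ := (D.H_nodup b).ne_of_getElem?_eq_some hlt₂.ne hi₂ hj₂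
  obtain rfl : a = b := D.reflTransGen_P_antisymm
    (D.reflTransGen_parent_of_common_ancestor hx₁ hy₁ hpx₁ hpy₁ hne₁
      (hx₂.tail hpx₂) (hy₂.tail hpy₂))
    (D.reflTransGen_parent_of_common_ancestor hx₂ hy₂ hpx₂ hpy₂ hne₂
      (hx₁.tail hpx₁) (hy₁.tail hpy₁))
  exact ⟨rfl, D.eq_of_ancestors_of_phi_eq hx₁ hx₂ hpx₁ hpx₂,
    D.eq_of_ancestors_of_phi_eq hy₁ hy₂ hpy₁ hpy₂⟩

end Dallajascar
end

section
/- For every p ≥ 1, the family of sets D(Y), where Y ranges over the unitary Stratinos of length p, is pairwise disjoint and its union is DNJ(p); equivalently, every element of DNJ(p) belongs to D(Y) for exactly one unitary Stratino Y of length p. -/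
/-- `NJ` : the alphabet `{1, 1#, 2, 2#, 3, …}` encoded as `ℕ+ × Bool` with the
lexicographic order: `(n, false)` encodes `n` and `(n, true)` encodes `n#`. -/
abbrev NJ := Lex (ℕ+ × Bool)

/-- A Stratino is *unitary* if it is nonempty and its last term is `1`. -/
def Unitary (X : List NJ) : Prop :=
  X ≠ [] ∧ X.getLast? = some (toLex (1, false))

/-- For a unitary Stratino `Y = X ++ [1]`, the set
`D(Y) = {(X,n) | n ≥ 2} ∪ {(X,n#) | n ≥ 1} ∪ {(X,n,1) | n ≥ 1} ∪ {(X,n#,1) | n ≥ 1}`. -/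
def DSetOf (Y : List NJ) : Set (List NJ) :=
  {Z | (∃ n : ℕ+, 2 ≤ n ∧ Z = Y.dropLast ++ [toLex (n, false)]) ∨
       (∃ n : ℕ+, Z = Y.dropLast ++ [toLex (n, true)]) ∨
       (∃ n : ℕ+, Z = Y.dropLast ++ [toLex (n, false), toLex (1, false)]) ∨
       (∃ n : ℕ+, Z = Y.dropLast ++ [toLex (n, true), toLex (1, false)])}

/-- `DNJ p` : the set of non-unitary Stratinos of length `p` together with the unitary
Stratinos of length `p + 1`. -/
def DNJ (p : ℕ) : Set (List NJ) :=
  {Z | (Z.length = p ∧ ¬ Unitary Z) ∨ (Z.length = p + 1 ∧ Unitary Z)}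


/-
Writing a unitary `Y` as `X ++ [1]`, the set `D(Y)` consists of the words `X ++ [a]` with `a ≠ 1`
(the non-unitary words of length `|Y|`) and the words `X ++ [a, 1]` (the unitary words of
length `|Y| + 1`). Conversely every word of `DNJ p` has one of these two shapes, and `X` is
recovered from it as its prefix of length `p - 1`.
-/

theorem unitary_iff_exists_eq_append {Y : List NJ} :
    Unitary Y ↔ ∃ X, Y = X ++ [toLex (1, false)] := by
  rw [Unitary, List.getLast?_eq_some_iff, and_iff_right_iff_imp]
  rintro ⟨X, rfl⟩
  simp

theorem unitary_append_singleton_iff {X : List NJ} {a : NJ} :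
    Unitary (X ++ [a]) ↔ a = toLex (1, false) := by
  simp [Unitary]

theorem NJ.ne_one_iff {a : NJ} :
    a ≠ toLex (1, false) ↔
      (∃ n : ℕ+, 2 ≤ n ∧ a = toLex (n, false)) ∨ ∃ n : ℕ+, a = toLex (n, true) := by
  obtain ⟨⟨n, _ | _⟩, rfl⟩ : ∃ x : ℕ+ × Bool, a = toLex x := ⟨ofLex a, rfl⟩
  · simp only [ne_eq, EmbeddingLike.apply_eq_iff_eq, Prod.mk.injEq, and_true, exists_eq_right',
      Bool.false_eq_true, and_false, exists_false, or_false]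
    rw [← PNat.coe_inj, ← PNat.coe_le_coe, PNat.one_coe, PNat.val_ofNat]
    have := n.pos
    omega
  · simp

theorem NJ.exists_iff {P : NJ → Prop} :
    (∃ a, P a) ↔ ∃ n : ℕ+, P (toLex (n, false)) ∨ P (toLex (n, true)) :=
  ⟨fun ⟨a, ha⟩ ↦ ⟨(ofLex a).1, by cases h : (ofLex a).2 <;> simp [← h, ha]⟩,
    fun ⟨_, hn⟩ ↦ hn.elim (⟨_, ·⟩) (⟨_, ·⟩)⟩

theorem mem_DSetOf_append_one_iff {X Z : List NJ} :
    Z ∈ DSetOf (X ++ [toLex (1, false)]) ↔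
      (∃ a ≠ toLex (1, false), Z = X ++ [a]) ∨ ∃ a, Z = X ++ [a, toLex (1, false)] := by
  simp only [DSetOf, Set.mem_ofPred_eq, List.dropLast_concat, NJ.exists_iff, NJ.ne_one_iff]
  grind

theorem dropLast_prefix_of_mem_DSetOf {Y Z : List NJ} (hZ : Z ∈ DSetOf Y) :
    Y.dropLast <+: Z := by
  rcases hZ with ⟨_, _, rfl⟩ | ⟨_, rfl⟩ | ⟨_, rfl⟩ | ⟨_, rfl⟩ <;> exact List.prefix_append _ _

theorem eq_of_mem_DSetOf {Y Y' Z : List NJ} (hY : Unitary Y) (hY' : Unitary Y')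
    (hlen : Y.length = Y'.length) (hZ : Z ∈ DSetOf Y) (hZ' : Z ∈ DSetOf Y') : Y = Y' := by
  obtain ⟨X, rfl⟩ := unitary_iff_exists_eq_append.1 hY
  obtain ⟨X', rfl⟩ := unitary_iff_exists_eq_append.1 hY'
  have hX := List.prefix_iff_eq_take.1 (dropLast_prefix_of_mem_DSetOf hZ)
  have hX' := List.prefix_iff_eq_take.1 (dropLast_prefix_of_mem_DSetOf hZ')
  simp only [List.dropLast_concat, List.length_append, List.length_singleton] at hX hX' hlen
  rw [hX, hX', Nat.add_right_cancel hlen]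

theorem DSetOf_subset_DNJ {Y : List NJ} (hY : Unitary Y) : DSetOf Y ⊆ DNJ Y.length := by
  obtain ⟨X, rfl⟩ := unitary_iff_exists_eq_append.1 hY
  intro Z hZ
  rcases mem_DSetOf_append_one_iff.1 hZ with ⟨a, ha, rfl⟩ | ⟨a, rfl⟩
  · exact Or.inl ⟨by simp, by rwa [unitary_append_singleton_iff]⟩
  · refine Or.inr ⟨by simp, ?_⟩
    rw [← List.singleton_append, ← List.append_assoc, unitary_append_singleton_iff]

theorem exists_mem_DSetOf_of_mem_DNJ {p : ℕ} (hp : 1 ≤ p) {Z : List NJ} (hZ : Z ∈ DNJ p) :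
    ∃ X : List NJ, X.length + 1 = p ∧ Z ∈ DSetOf (X ++ [toLex (1, false)]) := by
  rcases hZ with ⟨hlen, hZ⟩ | ⟨hlen, hZ⟩
  · rcases List.eq_nil_or_concat' Z with rfl | ⟨X, a, rfl⟩
    · simp at hlen; omega
    rw [unitary_append_singleton_iff] at hZ
    exact ⟨X, by simpa using hlen, mem_DSetOf_append_one_iff.2 (Or.inl ⟨a, hZ, rfl⟩)⟩
  · obtain ⟨W, rfl⟩ := unitary_iff_exists_eq_append.1 hZ
    rcases List.eq_nil_or_concat' W with rfl | ⟨X, a, rfl⟩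
    · simp at hlen; omega
    exact ⟨X, by simpa using hlen, mem_DSetOf_append_one_iff.2 (Or.inr ⟨a, by simp⟩)⟩

/-- For `p ≥ 1`, the sets `D(Y)`, for `Y` ranging over the unitary Stratinos of
length `p`, form a partition of `DNJ p`: each is contained in `DNJ p`, and every element
of `DNJ p` lies in `D(Y)` for exactly one such `Y`. -/
theorem DSet_partition (p : ℕ) (hp : 1 ≤ p) :
    (∀ Y : List NJ, Unitary Y → Y.length = p → DSetOf Y ⊆ DNJ p) ∧
    (∀ Z ∈ DNJ p, ∃! Y : List NJ, Unitary Y ∧ Y.length = p ∧ Z ∈ DSetOf Y) := by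
  refine ⟨fun Y hY hlen ↦ hlen ▸ DSetOf_subset_DNJ hY, fun Z hZ ↦ ?_⟩
  obtain ⟨X, hlen, hX⟩ := exists_mem_DSetOf_of_mem_DNJ hp hZ
  have hunit : Unitary (X ++ [toLex (1, false)]) := unitary_iff_exists_eq_append.2 ⟨X, rfl⟩
  refine ⟨X ++ [toLex (1, false)], ⟨hunit, by simpa using hlen, hX⟩, ?_⟩
  rintro Y ⟨hY, hYlen, hYZ⟩
  exact eq_of_mem_DSetOf hY hunit (by simpa [hYlen] using hlen.symm) hYZ hX
end

section
/- For every Dallajascar (φ, H, r) on a finite nonempty type S, the word M(φ,H) is a Simple Jassological word: it is nonempty, it contains equally many occurrences of true and false, and every nonempty proper prefix of it contains strictly more occurrences of true than of false. -/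
namespace Dallajascar

variable {S : Type*} [Fintype S] [Nonempty S]

/-- The parent relation is well-founded. -/
theorem wfP (D : Dallajascar S) : WellFounded D.P := by
  haveI : IsTrans S (Relation.TransGen D.P) := ⟨fun _ _ _ h₁ h₂ => h₁.trans h₂⟩
  haveI : IsIrrefl S (Relation.TransGen D.P) := ⟨D.acyclic⟩
  exact Subrelation.wf (r := Relation.TransGen D.P)
    (fun {x y} h => Relation.TransGen.single h)
    (Finite.wellFounded_of_trans_of_irrefl _)

/-- `W D x` : the word over `{true (open), false (close)}` associated with the subtree
rooted at `x`, defined by well-founded recursion: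
`W x = true :: (((H x).map W).flatten ++ [false])`. -/
noncomputable def W (D : Dallajascar S) : S → List Bool :=
  D.wfP.fix fun x ih =>
    true :: ((((D.H x).attach.map fun (y : {y : S // y ∈ D.H x}) =>
      ih y.1 ((D.mem_H x y.1).1 y.2)).flatten) ++ [false])

/-- `M(φ,H)` : the Jassological word of the Dallajascar. -/
noncomputable def MJword (D : Dallajascar S) : List Bool := D.W D.r

end Dallajascar

/-- A *Mot Jassologique Simple* : a nonempty word containing equally many opening
(`true`) and closing (`false`) characters, every nonempty proper prefix of which contains
strictly more opening than closing characters. -/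
def SimpleJasso (M : List Bool) : Prop :=
  M ≠ [] ∧ M.count true = M.count false ∧
    ∀ t : List Bool, t <+: M → t ≠ [] → t ≠ M → t.count false < t.count true


/-!
Call a word balanced if it has as many `true`s as `false`s and no prefix has more `false`s
than `true`s. Simple words are balanced, concatenations of balanced words are balanced, and
wrapping a balanced word as `true :: body ++ [false]` gives a simple word, since every nonempty
proper prefix then carries the leading `true` in excess. As `W x` is exactly such a wrapping of
the concatenated words of the children of `x`, well-founded induction along the parent relation
shows that every `W x`, in particular `W r`, is simple.
-/

theorem List.prefix_or_eq_append_of_prefix_append {α : Type*} {s A B : List α}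
    (h : s <+: A ++ B) : s <+: A ∨ ∃ s', s = A ++ s' ∧ s' <+: B := by
  rcases le_or_gt s.length A.length with hl | hl
  · exact Or.inl (List.prefix_of_prefix_length_le h (A.prefix_append B) hl)
  · obtain ⟨s', rfl⟩ := List.prefix_of_prefix_length_le (A.prefix_append B) h hl.le
    exact Or.inr ⟨s', rfl, List.prefix_append_right_inj A |>.mp h⟩

def IsBalanced (M : List Bool) : Prop :=
  M.count true = M.count false ∧ ∀ s : List Bool, s <+: M → s.count false ≤ s.count true

namespace IsBalanced

theorem nil : IsBalanced [] :=
  ⟨rfl, fun s hs => by simp [List.prefix_nil.mp hs]⟩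

theorem append {A B : List Bool} (hA : IsBalanced A) (hB : IsBalanced B) :
    IsBalanced (A ++ B) := by
  refine ⟨by simp [hA.1, hB.1], fun s hs => ?_⟩
  rcases List.prefix_or_eq_append_of_prefix_append hs with hsA | ⟨s', rfl, hs'B⟩
  · exact hA.2 s hsA
  · simp only [List.count_append]
    exact Nat.add_le_add hA.1.ge (hB.2 s' hs'B)

theorem flatten {L : List (List Bool)} (h : ∀ A ∈ L, IsBalanced A) : IsBalanced L.flatten := by
  induction L with
  | nil => exact nil
  | cons A L ih =>
    exact (h A List.mem_cons_self).append (ih fun B hB => h B (List.mem_cons_of_mem A hB))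

theorem simpleJasso_wrap {body : List Bool} (h : IsBalanced body) :
    SimpleJasso (true :: (body ++ [false])) := by
  refine ⟨List.cons_ne_nil _ _, by simp [h.1], fun t ht ht_ne ht_ne_self => ?_⟩
  obtain rfl | ⟨t', rfl, ht'⟩ := List.prefix_cons_iff.mp ht
  · exact absurd rfl ht_ne
  obtain rfl | ht'_body := List.prefix_concat_iff.mp ht'
  · exact absurd rfl ht_ne_self
  have := h.2 t' ht'_body
  simp only [List.count_cons_self, List.count_cons_of_ne (by decide : true ≠ false)]
  omega

end IsBalanced

theorem SimpleJasso.isBalanced {M : List Bool} (h : SimpleJasso M) : IsBalanced M := by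
  refine ⟨h.2.1, fun s hs => ?_⟩
  by_cases hs_nil : s = []
  · simp [hs_nil]
  by_cases hs_self : s = M
  · exact hs_self ▸ h.2.1.ge
  · exact (h.2.2 s hs hs_nil hs_self).le

namespace Dallajascar

variable {S : Type*} [Fintype S] [Nonempty S]

theorem W_eq (D : Dallajascar S) (x : S) :
    D.W x = true :: (((D.H x).map D.W).flatten ++ [false]) := by
  rw [W, WellFounded.fix_eq, List.map_attach_eq_pmap, List.pmap_eq_map]

theorem simpleJasso_W (D : Dallajascar S) (x : S) : SimpleJasso (D.W x) := by
  induction x using D.wfP.induction with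
  | _ x ih =>
    rw [D.W_eq x]
    refine IsBalanced.simpleJasso_wrap (IsBalanced.flatten fun A hA => ?_)
    obtain ⟨y, hy, rfl⟩ := List.mem_map.mp hA
    exact (ih y ((D.mem_H x y).1 hy)).isBalanced

end Dallajascar

/-- The Jassological word of any Dallajascar is a Simple Jassological word. -/
theorem mjword_simpleJasso {S : Type*} [Fintype S] [Nonempty S] (D : Dallajascar S) :
    SimpleJasso D.MJword :=
  D.simpleJasso_W D.r
end

section
/- (Section 3.3.5) Let M : List Bool be a Simple Jassological word with m occurrences of true, at indices α_1 < α_2 < ⋯ < α_m, and for each k let β_k be the least index β > α_k such that the factor of M from index α_k to index β (inclusive) contains equally many occurrences of true and false. Set a_k = (α_k, β_k) and S = {a_1, …, a_m}. Define φ : S → Option S by φ(a_1) = none and, for 2 ≤ k ≤ m, φ(a_k) = some a_q where q is the largest index with 1 ≤ q ≤ k−1 and β_k < β_q; define H(a) as the list of those a_k with φ(a_k) = some a, listed in order of increasing k. Then (φ, H, a_1) is a Dallajascar on S (conditions (i)–(iv) hold), and M(φ,H) = M. -/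
/-- `Bal M i j` : the factor of `M` from index `i` to index `j` (inclusive) contains
equally many `true` and `false`. -/
def Bal (M : List Bool) (i j : ℕ) : Prop :=
  ((M.drop i).take (j + 1 - i)).count true = ((M.drop i).take (j + 1 - i)).count false


theorem List.extract_append_extract {γ : Type*} (l : List γ) {s t u : ℕ} (hst : s ≤ t)
    (htu : t ≤ u) : l.extract s t ++ l.extract t u = l.extract s u := by
  simp only [List.extract_eq_take_drop]
  rw [show u - s = (t - s) + (u - t) by omega, List.take_add, List.drop_drop,
    show s + (t - s) = t by omega]

theorem List.extract_self_add_one {γ : Type*} {l : List γ} {i : ℕ} {x : γ} (h : l[i]? = some x) :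
    l.extract i (i + 1) = [x] := by
  simp [List.take_one, h]

theorem List.extract_eq_cons_append {γ : Type*} {l : List γ} {a b : ℕ} {x y : γ} (hab : a < b)
    (ha : l[a]? = some x) (hb : l[b]? = some y) :
    l.extract a (b + 1) = x :: (l.extract (a + 1) b ++ [y]) := by
  rw [← l.extract_append_extract (Nat.le_succ a) (show a + 1 ≤ b + 1 by omega),
    ← l.extract_append_extract hab (Nat.le_succ b), List.extract_self_add_one ha, List.extract_self_add_one hb]
  rfl

theorem List.filter_eq_cons_of_pairwise_lt {γ : Type*} [LinearOrder γ] {l : List γ}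
    (hl : l.Pairwise (· < ·)) {p : γ → Bool} {c : γ} (hc : c ∈ l) (hpc : p c)
    (hmin : ∀ k ∈ l, p k → c ≤ k) :
    l.filter p = c :: l.filter fun k => decide (c < k) && p k := by
  induction l with
  | nil => simp at hc
  | cons a t ih =>
    obtain ⟨ha, ht⟩ := List.pairwise_cons.1 hl
    rcases List.mem_cons.1 hc with rfl | hct
    · rw [List.filter_cons_of_pos hpc, List.filter_cons_of_neg (by simp)]
      exact congrArg _ (List.filter_congr fun k hk => by simp [ha k hk])
    · have hpa : ¬p a := fun hpa => (ha c hct).not_ge (hmin a (by simp) hpa)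
      rw [List.filter_cons_of_neg hpa, List.filter_cons_of_neg (by simp [hpa])]
      exact ih ht hct fun k hk => hmin k (List.mem_cons_of_mem a hk)

def height (M : List Bool) (i : ℕ) : ℤ :=
  (M.take i).count true - (M.take i).count false

theorem height_zero (M : List Bool) : height M 0 = 0 := by
  simp [height]

theorem height_succ {M : List Bool} {i : ℕ} {b : Bool} (h : M[i]? = some b) :
    height M (i + 1) = height M i + if b then 1 else -1 := by
  simp only [height, List.take_add_one, h, Option.toList_some, List.count_append]
  cases b <;> simp <;> ring

theorem height_sub_one_le (M : List Bool) (i : ℕ) : height M i - 1 ≤ height M (i + 1) := by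
  cases h : M[i]? with
  | none =>
    have hi : M.length ≤ i := List.getElem?_eq_none_iff.1 h
    simp [height, List.take_of_length_le hi, List.take_of_length_le (hi.trans i.le_succ)]
  | some b => have := height_succ h; cases b <;> simp at this <;> omega

theorem getElem?_eq_some_true_of_height_le {M : List Bool} {i : ℕ} (hi : i < M.length)
    (h : height M i ≤ height M (i + 1)) : M[i]? = some true := by
  cases hb : M[i] with
  | false => have := height_succ (hb ▸ List.getElem?_eq_getElem hi); simp at this; omega
  | true => exact hb ▸ List.getElem?_eq_getElem hi

theorem getElem?_eq_some_false_of_height_lt {M : List Bool} {i : ℕ} (hi : i < M.length)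
    (h : height M (i + 1) < height M i) : M[i]? = some false := by
  cases hb : M[i] with
  | false => exact hb ▸ List.getElem?_eq_getElem hi
  | true => have := height_succ (hb ▸ List.getElem?_eq_getElem hi); simp at this; omega

theorem bal_iff_height_eq {M : List Bool} {i j : ℕ} (hij : i ≤ j) :
    Bal M i j ↔ height M (j + 1) = height M i := by
  have htake : M.take (j + 1) = M.take i ++ (M.drop i).take (j + 1 - i) := by
    rw [← List.take_add, Nat.add_sub_cancel' (by omega)]
  simp only [Bal, height, htake, List.count_append]
  push_cast
  omega

namespace SimpleJasso

variable {M : List Bool}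

theorem height_length (hM : SimpleJasso M) : height M M.length = 0 := by
  simp [height, hM.2.1]

theorem height_pos (hM : SimpleJasso M) {i : ℕ} (h0 : 0 < i) (hi : i < M.length) :
    0 < height M i := by
  have := hM.2.2 (M.take i) (List.take_prefix i M) (List.ne_nil_of_length_pos (by simp; omega))
    (by intro h; have := congrArg List.length h; simp at this; omega)
  simp only [height]
  omega

theorem height_nonneg (hM : SimpleJasso M) (i : ℕ) : 0 ≤ height M i := by
  rcases Nat.eq_zero_or_pos i with rfl | h0
  · simp [height_zero]
  rcases lt_or_ge i M.length with hi | hi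
  · exact (hM.height_pos h0 hi).le
  · simp [height, List.take_of_length_le hi, hM.2.1]

theorem getElem?_zero (hM : SimpleJasso M) : M[0]? = some true := by
  refine getElem?_eq_some_true_of_height_le (List.length_pos_iff.2 hM.1) ?_
  rw [height_zero]
  exact hM.height_nonneg 1

end SimpleJasso

def IsMatchingClose (M : List Bool) (a b : ℕ) : Prop :=
  a < b ∧ Bal M a b ∧ ∀ j : ℕ, a < j → j < b → ¬ Bal M a j

namespace IsMatchingClose

variable {M : List Bool} {a b : ℕ}

theorem height_succ_right (h : IsMatchingClose M a b) : height M (b + 1) = height M a :=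
  (bal_iff_height_eq h.1.le).1 h.2.1

theorem height_lt (h : IsMatchingClose M a b) (ha : M[a]? = some true) {i : ℕ} (hai : a < i)
    (hib : i ≤ b) : height M a < height M i := by
  induction i, hai using Nat.le_induction with
  | base => simp [height_succ ha]
  | succ i hai ih =>
    have hne : height M (i + 1) ≠ height M a := fun heq =>
      h.2.2 i hai (by omega) ((bal_iff_height_eq (by omega)).2 heq)
    have := height_sub_one_le M i
    have := ih (by omega)
    omega

theorem lt_length (h : IsMatchingClose M a b) (hM : SimpleJasso M) (ha : M[a]? = some true) :
    b < M.length := by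
  by_contra hb
  have hlt := h.height_lt ha (List.getElem?_eq_some_iff.1 ha).1 (not_lt.1 hb)
  have := hM.height_nonneg a
  rw [hM.height_length] at hlt
  omega

theorem getElem?_right (h : IsMatchingClose M a b) (hM : SimpleJasso M)
    (ha : M[a]? = some true) : M[b]? = some false :=
  getElem?_eq_some_false_of_height_lt (h.lt_length hM ha)
    (h.height_succ_right ▸ h.height_lt ha h.1 le_rfl)

theorem nested (h : IsMatchingClose M a b) (ha : M[a]? = some true) {a' b' : ℕ}
    (h' : IsMatchingClose M a' b') (ha' : M[a']? = some true) (haa' : a < a') (hab' : a' ≤ b) :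
    b' < b := by
  have hlt := h.height_lt ha haa' hab'
  by_contra hbb
  rcases (not_lt.1 hbb).eq_or_lt with rfl | hbb'
  · have := h'.height_succ_right
    rw [h.height_succ_right] at this
    omega
  · have := h'.height_lt ha' (Nat.lt_succ_of_le hab') hbb'
    rw [h.height_succ_right] at this
    omega

end IsMatchingClose

structure IsBracketPairing (M : List Bool) {m : ℕ} (α β : Fin m → ℕ) : Prop where
  strictMono : StrictMono α
  getElem?_α : ∀ k, M[α k]? = some true
  exists_α_eq : ∀ i, M[i]? = some true → ∃ k, α k = i
  isMatchingClose : ∀ k, IsMatchingClose M (α k) (β k)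

/-- The innermost pair enclosing the `k`-th one; `Finset.max ∅ = ⊥` is `none`. -/
def parent {m : ℕ} (β : Fin m → ℕ) (k : Fin m) : Option (Fin m) :=
  (Finset.univ.filter fun q => q < k ∧ β k < β q).max

theorem parent_eq_some_iff {m : ℕ} {β : Fin m → ℕ} {k q : Fin m} :
    parent β k = some q ↔ q < k ∧ β k < β q ∧ ∀ q', q' < k → β k < β q' → q' ≤ q := by
  constructor
  · intro h
    have hq := Finset.mem_of_max h
    simp only [Finset.mem_filter, Finset.mem_univ, true_and] at hq
    exact ⟨hq.1, hq.2, fun q' h1 h2 => Finset.le_max_of_eq (by simp [h1, h2]) h⟩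
  · rintro ⟨h1, h2, hmax⟩
    change Finset.max _ = (q : WithBot (Fin m))
    refine le_antisymm (Finset.max_le fun q' hq' => ?_) (Finset.le_max (by simp [h1, h2]))
    simp only [Finset.mem_filter, Finset.mem_univ, true_and] at hq'
    exact WithBot.coe_le_coe.2 (hmax q' hq'.1 hq'.2)

theorem parent_eq_none_iff {m : ℕ} {β : Fin m → ℕ} {k : Fin m} :
    parent β k = none ↔ ∀ q < k, β q ≤ β k := by
  change Finset.max _ = ⊥ ↔ _
  rw [Finset.max_eq_bot, Finset.filter_eq_empty_iff]
  simp

namespace Dallajascar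

variable {S : Type*} [Fintype S] [Nonempty S]

def ofParent [Preorder S] [DecidableEq S] (phi : S → Option S) (r : S) (l : List S)
    (hl : l.Nodup) (hmem : ∀ x, x ∈ l) (h_root : phi r = none)
    (h_ne : ∀ x, x ≠ r → phi x ≠ none) (h_lt : ∀ x y, phi x = some y → y < x) :
    Dallajascar S where
  phi := phi
  H x := l.filter fun y => decide (phi y = some x)
  r := r
  phi_root := h_root
  phi_ne_none := h_ne
  acyclic x hx := by
    have hlt : ∀ y z, Relation.TransGen (fun y z => phi y = some z) y z → z < y := by
      intro y z h
      induction h with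
      | single h => exact h_lt _ _ h
      | tail _ h ih => exact (h_lt _ _ h).trans ih
    exact lt_irrefl x (hlt x x hx)
  H_nodup _ := hl.filter _
  mem_H x y := by simp [hmem]

end Dallajascar

namespace IsBracketPairing

variable {M : List Bool} {m : ℕ} {α β : Fin m → ℕ}

theorem α_lt_length (h : IsBracketPairing M α β) (k : Fin m) : α k < M.length :=
  (List.getElem?_eq_some_iff.1 (h.getElem?_α k)).1

theorem height_α_succ (h : IsBracketPairing M α β) (k : Fin m) :
    height M (α k + 1) = height M (α k) + 1 := by
  simp [height_succ (h.getElem?_α k)]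

theorem height_lt (h : IsBracketPairing M α β) (k : Fin m) {i : ℕ} (h1 : α k < i)
    (h2 : i ≤ β k) : height M (α k) < height M i :=
  (h.isMatchingClose k).height_lt (h.getElem?_α k) h1 h2

theorem nested (h : IsBracketPairing M α β) {q k : Fin m} (h1 : α q < α k) (h2 : α k ≤ β q) :
    β k < β q :=
  (h.isMatchingClose q).nested (h.getElem?_α q) (h.isMatchingClose k) (h.getElem?_α k) h1 h2

theorem α_root (h : IsBracketPairing M α β) (hM : SimpleJasso M) (hm : 0 < m) :
    α ⟨0, hm⟩ = 0 := by
  obtain ⟨k, hk⟩ := h.exists_α_eq 0 hM.getElem?_zero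
  have := h.strictMono.monotone (show (⟨0, hm⟩ : Fin m) ≤ k from Nat.zero_le _)
  omega

theorem β_root (h : IsBracketPairing M α β) (hM : SimpleJasso M) (hm : 0 < m) :
    β ⟨0, hm⟩ + 1 = M.length := by
  have hc := h.isMatchingClose ⟨0, hm⟩
  have hlt := hc.lt_length hM (h.getElem?_α _)
  have h0 := hc.height_succ_right
  rw [h.α_root hM hm, height_zero] at h0
  by_contra hne
  have := hM.height_pos (i := β ⟨0, hm⟩ + 1) (by omega) (by omega)
  omega

theorem parent_ne_none (h : IsBracketPairing M α β) (hM : SimpleJasso M) (hm : 0 < m)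
    {k : Fin m} (hk : k ≠ ⟨0, hm⟩) : parent β k ≠ none := by
  have h0k : (⟨0, hm⟩ : Fin m) < k := lt_of_le_of_ne (Nat.zero_le _) (Ne.symm hk)
  have hα0 : α ⟨0, hm⟩ < α k := h.strictMono h0k
  have hαk := h.α_lt_length k
  have hβ0 := h.β_root hM hm
  rw [Ne, parent_eq_none_iff]
  exact fun hle => (hle _ h0k).not_gt (h.nested hα0 (by omega))

/-- An enclosing pair strictly between `x` and `c` would put `c` two levels above `x`. -/
theorem parent_eq_some_of_height (h : IsBracketPairing M α β) {x c : Fin m} (h1 : α x < α c)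
    (h2 : α c ≤ β x) (hc : height M (α c) = height M (α x) + 1) : parent β c = some x := by
  refine parent_eq_some_iff.2 ⟨h.strictMono.lt_iff_lt.1 h1, h.nested h1 h2, fun q hqc hβq => ?_⟩
  by_contra hxq
  have hαxq := h.strictMono (not_le.1 hxq)
  have hαqc := h.strictMono hqc
  have := h.height_lt x hαxq (by omega)
  have := h.height_lt q hαqc (by have := (h.isMatchingClose c).1; omega)
  omega

theorem β_lt_α_of_parent_eq (h : IsBracketPairing M α β) {x c k : Fin m}
    (hc : parent β c = some x) (hk : parent β k = some x) (hck : c < k) : β c < α k := by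
  obtain ⟨hxc, -, -⟩ := parent_eq_some_iff.1 hc
  obtain ⟨-, -, hmax⟩ := parent_eq_some_iff.1 hk
  by_contra hle
  exact (hmax c hck (h.nested (h.strictMono hck) (not_lt.1 hle))).not_gt hxc

/-- The character at `s` opens a child `c` of `x`, being one level above `α x`, and the next
child of `x` opens right after `β c`. -/
theorem flatten_extract_children (h : IsBracketPairing M α β) (hM : SimpleJasso M)
    (x : Fin m) (s : ℕ) (hxs : α x < s) (hsx : s ≤ β x)
    (hs : height M s = height M (α x) + 1) :
    (((List.finRange m).filter fun k => decide (s ≤ α k) && decide (parent β k = some x)).map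
      fun k => M.extract (α k) (β k + 1)).flatten = M.extract s (β x) := by
  rcases hsx.eq_or_lt with rfl | hsx
  · rw [List.filter_eq_nil_iff.2 fun k _ hk => ?_]
    · simp
    simp only [Bool.and_eq_true, decide_eq_true_eq] at hk
    have := (parent_eq_some_iff.1 hk.2).2.1
    have := (h.isMatchingClose k).1
    omega
  have hxlen := (h.isMatchingClose x).lt_length hM (h.getElem?_α x)
  have hs_true : M[s]? = some true := getElem?_eq_some_true_of_height_le (by omega)
    (hs ▸ h.height_lt x (by omega) hsx)
  obtain ⟨c, rfl⟩ := h.exists_α_eq s hs_true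
  have hcx := h.parent_eq_some_of_height hxs hsx.le hs
  have hβc := h.nested hxs hsx.le
  have hαβc := (h.isMatchingClose c).1
  have hsplit := List.filter_eq_cons_of_pairwise_lt (List.pairwise_lt_finRange m)
    (p := fun k => decide (α c ≤ α k) && decide (parent β k = some x)) (List.mem_finRange c)
    (by simp [hcx]) fun k _ hk => by
      simp only [Bool.and_eq_true, decide_eq_true_eq] at hk
      exact h.strictMono.le_iff_le.1 hk.1
  have hrest : ((List.finRange m).filter fun k =>
        decide (c < k) && (decide (α c ≤ α k) && decide (parent β k = some x))) =
      (List.finRange m).filter fun k => decide (β c + 1 ≤ α k) && decide (parent β k = some x) := by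
    refine List.filter_congr fun k _ => ?_
    rw [Bool.eq_iff_iff]
    simp only [Bool.and_eq_true, decide_eq_true_eq]
    constructor
    · rintro ⟨hck, -, hkx⟩
      exact ⟨h.β_lt_α_of_parent_eq hcx hkx hck, hkx⟩
    · rintro ⟨hk, hkx⟩
      exact ⟨h.strictMono.lt_iff_lt.1 (by omega), by omega, hkx⟩
  have hβc_height : height M (β c + 1) = height M (α x) + 1 :=
    (h.isMatchingClose c).height_succ_right.trans hs
  rw [hsplit, List.map_cons, List.flatten_cons, hrest,
    h.flatten_extract_children hM x (β c + 1) (by omega) hβc hβc_height]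
  exact List.extract_append_extract _ (by omega) hβc
termination_by β x - s

theorem W_eq_extract (h : IsBracketPairing M α β) (hM : SimpleJasso M) [Nonempty (Fin m)]
    (D : Dallajascar (Fin m))
    (hH : ∀ a, D.H a = (List.finRange m).filter fun k => decide (parent β k = some a))
    (k : Fin m) : D.W k = M.extract (α k) (β k + 1) := by
  refine D.wfP.induction (C := fun k => D.W k = M.extract (α k) (β k + 1)) k fun k ih => ?_
  have hchildren : D.H k = (List.finRange m).filter
      fun c => decide (α k + 1 ≤ α c) && decide (parent β c = some k) := by
    refine (hH k).trans (List.filter_congr fun c _ => ?_)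
    by_cases hck : parent β c = some k
    · simp [hck, h.strictMono (parent_eq_some_iff.1 hck).1]
    · simp [hck]
  have hk := h.isMatchingClose k
  rw [D.W_eq, List.map_congr_left fun c hc => ih c ((D.mem_H k c).1 hc), hchildren,
    h.flatten_extract_children hM k (α k + 1) (lt_add_one _) hk.1 (h.height_α_succ k)]
  exact (List.extract_eq_cons_append hk.1 (h.getElem?_α k)
    (hk.getElem?_right hM (h.getElem?_α k))).symm

end IsBracketPairing

theorem dallajascar_of_simpleJasso_general (M : List Bool) (hM : SimpleJasso M)
    (m : ℕ) (hm : 0 < m)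
    (α β : Fin m → ℕ)
    (hmono : StrictMono α)
    (hαtrue : ∀ k : Fin m, M[α k]? = some true)
    (hαall : ∀ i : ℕ, M[i]? = some true → ∃ k : Fin m, α k = i)
    (hβ : ∀ k : Fin m, α k < β k ∧ Bal M (α k) (β k) ∧
      ∀ j : ℕ, α k < j → j < β k → ¬ Bal M (α k) j) :
    haveI : Nonempty (Fin m) := ⟨⟨0, hm⟩⟩
    ∃ D : Dallajascar (Fin m),
      D.r = ⟨0, hm⟩ ∧
      D.phi ⟨0, hm⟩ = none ∧
      (∀ k : Fin m, 0 < (k : ℕ) → ∃ q : Fin m, D.phi k = some q ∧ q < k ∧ β k < β q ∧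
        ∀ q' : Fin m, q' < k → β k < β q' → q' ≤ q) ∧
      (∀ a : Fin m, D.H a = (List.finRange m).filter fun k => decide (D.phi k = some a)) ∧
      D.MJword = M := by
  have h : IsBracketPairing M α β := ⟨hmono, hαtrue, hαall, hβ⟩
  have : Nonempty (Fin m) := ⟨⟨0, hm⟩⟩
  let D : Dallajascar (Fin m) := .ofParent (parent β) ⟨0, hm⟩ (List.finRange m)
    (List.nodup_finRange m) List.mem_finRange
    (parent_eq_none_iff.2 fun q hq => absurd hq (Nat.not_lt_zero _))
    (fun k hk => h.parent_ne_none hM hm hk) (fun k q hkq => (parent_eq_some_iff.1 hkq).1)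
  refine ⟨D, rfl, D.phi_root, fun k hk => ?_, fun a => rfl, ?_⟩
  · obtain ⟨q, hq⟩ := Option.ne_none_iff_exists'.1
      (h.parent_ne_none hM hm (k := k) fun h0 => hk.ne' (congrArg Fin.val h0))
    exact ⟨q, hq, parent_eq_some_iff.1 hq⟩
  · show D.W ⟨0, hm⟩ = M
    rw [h.W_eq_extract hM D fun a => rfl, h.α_root hM hm, h.β_root hM hm]
    simp

/-- Section 3.3.5: from a Simple Jassological word `M` with `m` opening characters at
indices `α 0 < α 1 < ⋯`, with `β k` the least index `> α k` closing a balanced factor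
starting at `α k`, one gets a Dallajascar (rooted at the first opening character, with
`φ` sending each opening character to the innermost enclosing one and `H` listing the
antecedents in increasing order) whose Jassological word is `M`. -/
theorem dallajascar_of_simpleJasso (M : List Bool) (hM : SimpleJasso M)
    (m : ℕ) (hm : 0 < m) (hcount : M.count true = m)
    (α β : Fin m → ℕ)
    (hmono : StrictMono α)
    (hαtrue : ∀ k : Fin m, M[α k]? = some true)
    (hαall : ∀ i : ℕ, M[i]? = some true → ∃ k : Fin m, α k = i)
    (hβ : ∀ k : Fin m, α k < β k ∧ Bal M (α k) (β k) ∧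
      ∀ j : ℕ, α k < j → j < β k → ¬ Bal M (α k) j) :
    haveI : Nonempty (Fin m) := ⟨⟨0, hm⟩⟩
    ∃ D : Dallajascar (Fin m),
      D.r = ⟨0, hm⟩ ∧
      D.phi ⟨0, hm⟩ = none ∧
      (∀ k : Fin m, 0 < (k : ℕ) → ∃ q : Fin m, D.phi k = some q ∧ q < k ∧ β k < β q ∧
        ∀ q' : Fin m, q' < k → β k < β q' → q' ≤ q) ∧
      (∀ a : Fin m, D.H a = (List.finRange m).filter fun k => decide (D.phi k = some a)) ∧
      D.MJword = M :=
  dallajascar_of_simpleJasso_general M hM m hm α β hmono hαtrue hαall hβ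
end
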